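/- arXiv:2605.03264 — 2 statements merged into one kernel-verified Lean document; each statement's English description precedes it below -/
import Mathlib

section
/- Let Z be a measurable space, n ≥ 1, p ≥ 1, ε, δ ∈ (0,1), α > 0, and let θ̂ : Z^n → ℝ^p be measurable, γ : Z^n → [0,∞) measurable, and π_⊥ a probability measure on ℝ^p. Let θ ∈ ℝ^p and C_⊥ > 0 be such that ‖w − θ‖² ≤ C_⊥ for π_⊥-almost every w. Let ν be any probability measure on Z^n, let X ~ ν, and let θ̃ denote the output of the ePTR mechanism on input X (with internal randomness independent of X). Then, with M = 1 + (2/ε)·log(max(1/δ, 1/ε)), E[‖θ̃ − θ‖²] ≤ E_ν[‖θ̂(X) − θ‖²] + (8 α² p / ε²)·log(1.25/δ) + C_⊥·( ν({X : γ(X) < 2M}) + δ ), where the expectation on the left is over both X ~ ν and the mechanism's internal randomness. -/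
open MeasureTheory ProbabilityTheory Matrix
open scoped Classical NNReal ENNReal RealInnerProductSpace

noncomputable section

namespace EPTR

variable {Z : Type*}

/-- Hamming distance between two datasets of size `n`. -/
def hDist {n : ℕ} (X X' : Fin n → Z) : ℕ :=
  (Finset.univ.filter fun i => X i ≠ X' i).card

/-- Two datasets are neighbors if they differ in exactly one coordinate. -/
def Neighbor {n : ℕ} (X X' : Fin n → Z) : Prop := hDist X X' = 1

/-- Gaussian measure on Euclidean space with mean `m` and covariance `v • I`
(the product of one-dimensional Gaussians of variance `v`). -/
def gaussianE {ι : Type*} [Fintype ι] (m : EuclideanSpace ℝ ι) (v : ℝ≥0) :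
    Measure (EuclideanSpace ℝ ι) :=
  (Measure.pi fun i => gaussianReal (m i) v).map (MeasurableEquiv.toLp 2 (ι → ℝ))

/-- The threshold shift `M = 1 + (2/ε) log (max (1/δ) (1/ε))` of the ePTR mechanism. -/
def Mshift (ε δ : ℝ) : ℝ := 1 + 2 / ε * Real.log (max (1 / δ) (1 / ε))

/-- The release probability of the ePTR mechanism at sub-distance value `g`. -/
def relProb (ε δ g : ℝ) : ℝ :=
  Real.exp (ε * (g - Mshift ε δ) / 2) / (Real.exp (ε * (g - Mshift ε δ) / 2) + 1)

/-- The standard deviation `s = (2α/ε)√(2 log(1.25/δ))` of the ePTR Gaussian noise. -/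
def noiseSD (ε δ α : ℝ) : ℝ := 2 * α / ε * Real.sqrt (2 * Real.log (1.25 / δ))

/-- Output distribution of the ePTR mechanism on input dataset `X`
(Euclidean-space valued version). -/
def ePTR {n : ℕ} {ι : Type*} [Fintype ι] (ε δ α : ℝ)
    (θhat : (Fin n → Z) → EuclideanSpace ℝ ι) (γ : (Fin n → Z) → ℝ)
    (πbot : Measure (EuclideanSpace ℝ ι)) (X : Fin n → Z) :
    Measure (EuclideanSpace ℝ ι) :=
  ENNReal.ofReal (relProb ε δ (γ X)) • gaussianE (θhat X) (Real.toNNReal (noiseSD ε δ α ^ 2))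
    + ENNReal.ofReal (1 - relProb ε δ (γ X)) • πbot

/-- Output distribution of the ePTR mechanism on input dataset `X` (real valued version). -/
def ePTR1 {n : ℕ} (ε δ α : ℝ)
    (θhat : (Fin n → Z) → ℝ) (γ : (Fin n → Z) → ℝ)
    (πbot : Measure ℝ) (X : Fin n → Z) : Measure ℝ :=
  ENNReal.ofReal (relProb ε δ (γ X)) • gaussianReal (θhat X) (Real.toNNReal (noiseSD ε δ α ^ 2))
    + ENNReal.ofReal (1 - relProb ε δ (γ X)) • πbot

/-- `(ε, δ)`-differential privacy of a mechanism: for all neighboring datasets `X, X'`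
and all measurable events `B`, `μ_X(B) ≤ e^ε μ_{X'}(B) + δ`. -/
def IsDP {n : ℕ} {Ω : Type*} [MeasurableSpace Ω]
    (mech : (Fin n → Z) → Measure Ω) (ε δ : ℝ) : Prop :=
  ∀ X X' : Fin n → Z, Neighbor X X' → ∀ B : Set Ω, MeasurableSet B →
    mech X B ≤ ENNReal.ofReal (Real.exp ε) * mech X' B + ENNReal.ofReal δ

/-- Projection onto the closed ball of radius `a` in a normed space:
`proj a v = (a / max ‖v‖ a) • v`. -/
def proj {V : Type*} [NormedAddCommGroup V] [Module ℝ V] (a : ℝ) (v : V) : V :=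
  (a / max ‖v‖ a) • v

/-- Identification of `Fin p → ℝ` with Euclidean space. -/
def toE {p : ℕ} : (Fin p → ℝ) → EuclideanSpace ℝ (Fin p) :=
  ⇑(EuclideanSpace.equiv (Fin p) ℝ).symm

/-- ℓ²-operator norm of a square matrix. -/
def opNorm {p : ℕ} (A : Matrix (Fin p) (Fin p) ℝ) : ℝ :=
  ‖Matrix.toEuclideanCLM (𝕜 := ℝ) A‖

/-- Smallest eigenvalue of a (symmetric) matrix, via the Rayleigh quotient. -/
def lambdaMin {p : ℕ} (A : Matrix (Fin p) (Fin p) ℝ) : ℝ :=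
  ⨅ v : Metric.sphere (0 : EuclideanSpace ℝ (Fin p)) 1,
    ⟪Matrix.toEuclideanCLM (𝕜 := ℝ) A v.1, v.1⟫

/-- Index set of data points carrying label `k`. -/
def Ik {n K : ℕ} {E : Type*} (X : Fin n → E × Fin K) (k : Fin K) : Finset (Fin n) :=
  Finset.univ.filter fun j => (X j).2 = k

/-- Class-`k` sample frequency `μ̂_k = |I_k| / n`. -/
def classFreq {n K : ℕ} {E : Type*} (X : Fin n → E × Fin K) (k : Fin K) : ℝ :=
  (Ik X k).card / n

/-- Class-`k` sample mean (equal to `0` if the class is empty). -/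
def classMean {n K p : ℕ} (X : Fin n → EuclideanSpace ℝ (Fin p) × Fin K) (k : Fin K) :
    EuclideanSpace ℝ (Fin p) :=
  ((Ik X k).card : ℝ)⁻¹ • ∑ j ∈ Ik X k, (X j).1

/-- The sub-distance of the ePTR Bayes classifier:
`γ(X) = max(min_k |I_k(X)| - c₀ n - 1, 0)`. -/
def gammaBC {n K : ℕ} {E : Type*} (c0 : ℝ) (X : Fin n → E × Fin K) : ℝ :=
  max (((⨅ k : Fin K, (Ik X k).card : ℕ) : ℝ) - c0 * n - 1) 0

end EPTR

/-!
Conditionally on the data `X`, the output is Gaussian around `θ̂(X)` with probability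
`p(X) ≤ 1` and drawn from `π_⊥` with probability `1 - p(X)`. The Gaussian part costs its bias
`‖θ̂(X) - θ‖²` plus its trace `p s²`, the fallback part costs at most `C_⊥`. Finally
`1 - p(X) = 1 / (1 + exp (ε (γ(X) - M) / 2))` is at most `δ` once `γ(X) ≥ 2M`, because
`ε M / 2 ≥ log (1 / δ)`, and at most `1` otherwise.
-/

namespace EPTR

lemma lintegral_sq_sub_gaussianReal (m c : ℝ) (v : ℝ≥0) :
    ∫⁻ x, ENNReal.ofReal ((x - c) ^ 2) ∂gaussianReal m v = ENNReal.ofReal ((m - c) ^ 2 + v) := by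
  have hL2 : MemLp id 2 (gaussianReal (m - c) v) := memLp_id_gaussianReal 2
  have hsecond : ∫ y, y ^ 2 ∂gaussianReal (m - c) v = (m - c) ^ 2 + v := by
    have h := variance_eq_sub hL2
    simp only [variance_id_gaussianReal, id_eq, Pi.pow_apply, integral_id_gaussianReal] at h
    linarith
  rw [← lintegral_map (f := fun y => ENNReal.ofReal (y ^ 2)) (by fun_prop) (by fun_prop),
    gaussianReal_map_sub_const, ← hsecond]
  exact (ofReal_integral_eq_lintegral_ofReal hL2.integrable_sq
    (.of_forall fun y => sq_nonneg y)).symm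

lemma lintegral_sum_comp_eval_pi {ι : Type*} [Fintype ι] {X : ι → Type*}
    [∀ i, MeasurableSpace (X i)] (μ : ∀ i, Measure (X i)) [∀ i, IsProbabilityMeasure (μ i)]
    {f : ∀ i, X i → ℝ≥0∞} (hf : ∀ i, Measurable (f i)) :
    ∫⁻ x, ∑ i, f i (x i) ∂Measure.pi μ = ∑ i, ∫⁻ y, f i y ∂μ i :=
  (lintegral_finsetSum (f := fun i (x : ∀ j, X j) => f i (x i)) Finset.univ
    fun i _ => (hf i).comp (measurable_pi_apply i)).trans
    (Finset.sum_congr rfl fun i _ => (measurePreserving_eval μ i).lintegral_comp (hf i))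

lemma lintegral_sq_norm_sub_gaussianE {ι : Type*} [Fintype ι] (m c : EuclideanSpace ℝ ι)
    (v : ℝ≥0) :
    ∫⁻ w, ENNReal.ofReal (‖w - c‖ ^ 2) ∂gaussianE m v
      = ENNReal.ofReal (‖m - c‖ ^ 2 + Fintype.card ι * v) := by
  have hnorm (w : EuclideanSpace ℝ ι) :
      ENNReal.ofReal (‖w - c‖ ^ 2) = ∑ i, ENNReal.ofReal ((w i - c i) ^ 2) := by
    rw [EuclideanSpace.norm_sq_eq, ENNReal.ofReal_sum_of_nonneg fun i _ => sq_nonneg _]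
    simp [Real.norm_eq_abs, sq_abs]
  simp_rw [gaussianE, lintegral_map_equiv, hnorm, MeasurableEquiv.toLp_apply]
  rw [lintegral_sum_comp_eval_pi _ (f := fun i t => ENNReal.ofReal ((t - c i) ^ 2))
    fun i => by fun_prop]
  simp_rw [lintegral_sq_sub_gaussianReal]
  rw [← ENNReal.ofReal_sum_of_nonneg fun i _ => by positivity, Finset.sum_add_distrib,
    EuclideanSpace.norm_sq_eq]
  simp [Real.norm_eq_abs, sq_abs]

lemma lintegral_smul_add_smul_le {Ω : Type*} [MeasurableSpace Ω] (f : Ω → ℝ≥0∞)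
    (μ ν : Measure Ω) {a b : ℝ≥0∞} (ha : a ≤ 1) :
    ∫⁻ x, f x ∂(a • μ + b • ν) ≤ ∫⁻ x, f x ∂μ + b * ∫⁻ x, f x ∂ν := by
  rw [lintegral_add_measure, lintegral_smul_measure, lintegral_smul_measure, smul_eq_mul,
    smul_eq_mul]
  gcongr
  exact mul_le_of_le_one_left' ha

lemma relProb_nonneg (ε δ g : ℝ) : 0 ≤ relProb ε δ g := by
  unfold relProb
  positivity

lemma relProb_le_one (ε δ g : ℝ) : relProb ε δ g ≤ 1 := by
  unfold relProb
  rw [div_le_one (by positivity)]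
  linarith

lemma measurable_relProb (ε δ : ℝ) : Measurable (relProb ε δ) := by
  unfold relProb
  fun_prop

lemma one_sub_relProb (ε δ g : ℝ) :
    1 - relProb ε δ g = (Real.exp (ε * (g - Mshift ε δ) / 2) + 1)⁻¹ := by
  unfold relProb
  field_simp
  ring

lemma one_sub_relProb_le {ε δ g : ℝ} (hε : ε ∈ Set.Ioo 0 1) (hδ : 0 < δ)
    (hg : 2 * Mshift ε δ ≤ g) : 1 - relProb ε δ g ≤ δ := by
  obtain ⟨hε0, hε1⟩ := hε
  have hlog_le : Real.log (1 / δ) ≤ Real.log (max (1 / δ) (1 / ε)) :=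
    Real.log_le_log (by positivity) (le_max_left _ _)
  have hlog_pos : 0 < Real.log (max (1 / δ) (1 / ε)) :=
    Real.log_pos ((one_lt_one_div hε0 hε1).trans_le (le_max_right _ _))
  have hM : 0 ≤ Mshift ε δ := by
    unfold Mshift
    positivity
  have hexponent : Real.log (1 / δ) ≤ ε * (g - Mshift ε δ) / 2 :=
    calc Real.log (1 / δ) ≤ ε * Mshift ε δ / 2 := by
          rw [Mshift]
          field_simp
          linarith
      _ ≤ ε * (g - Mshift ε δ) / 2 := by gcongr; linarith
  calc 1 - relProb ε δ g = (Real.exp (ε * (g - Mshift ε δ) / 2) + 1)⁻¹ :=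
        one_sub_relProb ε δ g
    _ ≤ (Real.exp (ε * (g - Mshift ε δ) / 2))⁻¹ := by gcongr; linarith
    _ ≤ (1 / δ)⁻¹ := by
          gcongr
          exact (Real.log_le_iff_le_exp (by positivity)).1 hexponent
    _ = δ := by rw [one_div, inv_inv]

lemma lintegral_one_sub_relProb_le {Ω : Type*} [MeasurableSpace Ω] (ν : Measure Ω)
    [IsProbabilityMeasure ν] (γ : Ω → ℝ) {ε δ : ℝ} (hε : ε ∈ Set.Ioo 0 1) (hδ : 0 < δ) :
    ∫⁻ x, ENNReal.ofReal (1 - relProb ε δ (γ x)) ∂ν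
      ≤ ν {x | γ x < 2 * Mshift ε δ} + ENNReal.ofReal δ := by
  set S := {x | γ x < 2 * Mshift ε δ}
  have hpointwise (x : Ω) :
      ENNReal.ofReal (1 - relProb ε δ (γ x)) ≤ S.indicator 1 x + ENNReal.ofReal δ := by
    by_cases hx : x ∈ S
    · rw [Set.indicator_of_mem hx]
      exact (ENNReal.ofReal_le_one.2 (by linarith [relProb_nonneg ε δ (γ x)])).trans le_self_add
    · rw [Set.indicator_of_notMem hx, zero_add]
      exact ENNReal.ofReal_le_ofReal (one_sub_relProb_le hε hδ (not_lt.1 hx))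
  calc ∫⁻ x, ENNReal.ofReal (1 - relProb ε δ (γ x)) ∂ν
      ≤ ∫⁻ x, S.indicator 1 x + ENNReal.ofReal δ ∂ν := lintegral_mono hpointwise
    _ ≤ ν S + ENNReal.ofReal δ := by
          rw [lintegral_add_right _ measurable_const, lintegral_const, measure_univ, mul_one]
          gcongr
          exact lintegral_indicator_one_le S

lemma noiseSD_sq {ε δ : ℝ} (α : ℝ) (hlog : 0 ≤ Real.log (1.25 / δ)) :
    noiseSD ε δ α ^ 2 = 8 * α ^ 2 / ε ^ 2 * Real.log (1.25 / δ) := by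
  rw [noiseSD, mul_pow, Real.sq_sqrt (by positivity)]
  ring

lemma lintegral_sq_norm_sub_ePTR_le {Z : Type*} {n : ℕ} {ι : Type*} [Fintype ι]
    (ε δ α : ℝ) (θhat : (Fin n → Z) → EuclideanSpace ℝ ι) (γ : (Fin n → Z) → ℝ)
    (πbot : Measure (EuclideanSpace ℝ ι)) [IsProbabilityMeasure πbot]
    (θ : EuclideanSpace ℝ ι) {C : ℝ} (hπbot : ∀ᵐ w ∂πbot, ‖w - θ‖ ^ 2 ≤ C) (X : Fin n → Z) :
    ∫⁻ w, ENNReal.ofReal (‖w - θ‖ ^ 2) ∂ePTR ε δ α θhat γ πbot X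
      ≤ ENNReal.ofReal (‖θhat X - θ‖ ^ 2 + Fintype.card ι * noiseSD ε δ α ^ 2)
        + ENNReal.ofReal C * ENNReal.ofReal (1 - relProb ε δ (γ X)) := by
  refine (lintegral_smul_add_smul_le _ _ _
    (ENNReal.ofReal_le_one.2 (relProb_le_one ε δ (γ X)))).trans ?_
  rw [lintegral_sq_norm_sub_gaussianE, Real.coe_toNNReal _ (sq_nonneg _),
    mul_comm (ENNReal.ofReal C)]
  gcongr
  exact lintegral_le_const (hπbot.mono fun w hw => ENNReal.ofReal_le_ofReal hw)

end EPTR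

theorem ePTR_performance_general {Z : Type*} [MeasurableSpace Z] {n p : ℕ}
    {ε δ α : ℝ} (hε : ε ∈ Set.Ioo (0 : ℝ) 1) (hδ : δ ∈ Set.Ioo (0 : ℝ) 1)
    (θhat : (Fin n → Z) → EuclideanSpace ℝ (Fin p))
    (γ : (Fin n → Z) → ℝ) (hγmeas : Measurable γ)
    (πbot : Measure (EuclideanSpace ℝ (Fin p))) [IsProbabilityMeasure πbot]
    (θ : EuclideanSpace ℝ (Fin p)) {Cbot : ℝ}
    (hπbot : ∀ᵐ w ∂πbot, ‖w - θ‖ ^ 2 ≤ Cbot)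
    (ν : Measure (Fin n → Z)) [IsProbabilityMeasure ν] :
    ∫⁻ X, (∫⁻ w, ENNReal.ofReal (‖w - θ‖ ^ 2) ∂(EPTR.ePTR ε δ α θhat γ πbot X)) ∂ν
      ≤ (∫⁻ X, ENNReal.ofReal (‖θhat X - θ‖ ^ 2) ∂ν)
          + ENNReal.ofReal (8 * α ^ 2 * p / ε ^ 2 * Real.log (1.25 / δ))
          + ENNReal.ofReal Cbot *
              (ν {X | γ X < 2 * EPTR.Mshift ε δ} + ENNReal.ofReal δ) := by
  set noise := ENNReal.ofReal (8 * α ^ 2 * p / ε ^ 2 * Real.log (1.25 / δ))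
  set failure := fun X => ENNReal.ofReal (1 - EPTR.relProb ε δ (γ X))
  have hlog : 0 ≤ Real.log (1.25 / δ) :=
    Real.log_nonneg (by rw [le_div_iff₀ hδ.1]; linarith [hδ.2])
  have hnoise :
      (p : ℝ) * EPTR.noiseSD ε δ α ^ 2 = 8 * α ^ 2 * p / ε ^ 2 * Real.log (1.25 / δ) := by
    rw [EPTR.noiseSD_sq α hlog]
    ring
  have hfailure : Measurable failure :=
    ENNReal.measurable_ofReal.comp
      ((measurable_const.sub (EPTR.measurable_relProb ε δ)).comp hγmeas)
  have hpointwise (X : Fin n → Z) :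
      ∫⁻ w, ENNReal.ofReal (‖w - θ‖ ^ 2) ∂(EPTR.ePTR ε δ α θhat γ πbot X)
        ≤ ENNReal.ofReal (‖θhat X - θ‖ ^ 2) + (noise + ENNReal.ofReal Cbot * failure X) := by
    have h := EPTR.lintegral_sq_norm_sub_ePTR_le ε δ α θhat γ πbot θ hπbot X
    rwa [ENNReal.ofReal_add (sq_nonneg _) (by positivity), Fintype.card_fin,
      hnoise, add_assoc] at h
  calc _ ≤ ∫⁻ X, ENNReal.ofReal (‖θhat X - θ‖ ^ 2)
            + (noise + ENNReal.ofReal Cbot * failure X) ∂ν := lintegral_mono hpointwise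
    _ = (∫⁻ X, ENNReal.ofReal (‖θhat X - θ‖ ^ 2) ∂ν)
          + noise + ENNReal.ofReal Cbot * ∫⁻ X, failure X ∂ν := by
        rw [lintegral_add_right _ ((hfailure.const_mul _).const_add noise),
          lintegral_add_left measurable_const, lintegral_const, measure_univ, mul_one,
          lintegral_const_mul _ hfailure, add_assoc]
    _ ≤ _ := by
        gcongr
        exact EPTR.lintegral_one_sub_relProb_le ν γ hε hδ.1

/-- Theorem 2.2 (ePTR performance): the mean squared error of the ePTR output decomposes into
the privacy-less error of `θhat`, the local DP loss `(8α²p/ε²)·log(1.25/δ)`, and the PTR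
failure loss `C_⊥ (ν(γ < 2M) + δ)`. The expectation on the left is over both the data `X ~ ν`
and the internal randomness of the mechanism. -/
theorem ePTR_performance {Z : Type*} [MeasurableSpace Z] {n p : ℕ} (hn : 1 ≤ n) (hp : 1 ≤ p)
    {ε δ α : ℝ} (hε : ε ∈ Set.Ioo (0 : ℝ) 1) (hδ : δ ∈ Set.Ioo (0 : ℝ) 1) (hα : 0 < α)
    (θhat : (Fin n → Z) → EuclideanSpace ℝ (Fin p)) (hθmeas : Measurable θhat)
    (γ : (Fin n → Z) → ℝ) (hγmeas : Measurable γ)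
    (πbot : Measure (EuclideanSpace ℝ (Fin p))) [IsProbabilityMeasure πbot]
    (θ : EuclideanSpace ℝ (Fin p)) {Cbot : ℝ} (hCbot : 0 < Cbot)
    (hπbot : ∀ᵐ w ∂πbot, ‖w - θ‖ ^ 2 ≤ Cbot)
    (ν : Measure (Fin n → Z)) [IsProbabilityMeasure ν] :
    ∫⁻ X, (∫⁻ w, ENNReal.ofReal (‖w - θ‖ ^ 2) ∂(EPTR.ePTR ε δ α θhat γ πbot X)) ∂ν
      ≤ (∫⁻ X, ENNReal.ofReal (‖θhat X - θ‖ ^ 2) ∂ν)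
          + ENNReal.ofReal (8 * α ^ 2 * p / ε ^ 2 * Real.log (1.25 / δ))
          + ENNReal.ofReal Cbot *
              (ν {X | γ X < 2 * EPTR.Mshift ε δ} + ENNReal.ofReal δ) :=
  ePTR_performance_general hε hδ θhat γ hγmeas πbot θ hπbot ν
end
end

section
/- Let ε ∈ (0,1), δ ∈ (0,1), and set M = 1 + (2/ε)·log(max(1/δ, 1/ε)). Define q(t) = exp(ε(t − M)/2)/(exp(ε(t − M)/2) + 1). Then: (i) q(0) ≤ δ·e^{−ε/2}; (ii) q(1) ≤ δ; (iii) for every g ≥ 2M, 1 − q(g) ≤ δ; and (iv) e^ε·(1 − q(1)) = e^ε · exp(ε(M−1)/2)/(exp(ε(M−1)/2) + 1) ≥ 1. -/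
open MeasureTheory ProbabilityTheory Matrix
open scoped Classical NNReal ENNReal RealInnerProductSpace

noncomputable section

/-! With `L = log (max (1/δ) (1/ε))` the release probability is the logistic sigmoid
`q(t) = σ(ε(t - 1)/2 - L)`, and `e^{-L} = min δ ε`. Facts (i)–(iii) follow from `σ x ≤ eˣ` and
`1 - σ x = σ (-x)`; for (iv), `e^ε σ(L) ≥ 1` reduces to `1 + e^{-L} ≤ 1 + ε ≤ e^ε`. -/

namespace Real

lemma exp_div_exp_add_one (x : ℝ) : exp x / (exp x + 1) = sigmoid x := by
  rw [sigmoid_def, exp_neg]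
  field_simp

lemma sigmoid_le_exp (x : ℝ) : sigmoid x ≤ exp x :=
  calc sigmoid x = sigmoid (-x) * exp x := by simpa using (sigmoid_mul_rexp_neg (-x)).symm
    _ ≤ exp x := mul_le_of_le_one_left (exp_pos x).le (sigmoid_le_one (-x))

lemma one_sub_sigmoid_le_exp_neg (x : ℝ) : 1 - sigmoid x ≤ exp (-x) := by
  simpa only [← sigmoid_neg] using sigmoid_le_exp (-x)

lemma one_le_exp_mul_sigmoid {ε x : ℝ} (h : exp (-x) ≤ ε) : 1 ≤ exp ε * sigmoid x := by
  rw [sigmoid_def, ← div_eq_mul_inv, one_le_div (by positivity)]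
  linarith [add_one_le_exp ε]

lemma exp_neg_log_max_one_div_le {a b : ℝ} (ha : 0 < a) (hb : 0 < b) :
    exp (-log (max (1 / a) (1 / b))) ≤ min a b := by
  have hmax : 0 < max (1 / a) (1 / b) := lt_max_of_lt_left (one_div_pos.2 ha)
  rw [exp_neg, exp_log hmax]
  refine le_min ?_ ?_
  · exact inv_le_of_inv_le₀ ha (by simp)
  · exact inv_le_of_inv_le₀ hb (by simp)

end Real

namespace EPTR

open Real

lemma Mshift_sub_one_mul {ε : ℝ} (hε : ε ≠ 0) (δ : ℝ) :
    ε * (Mshift ε δ - 1) / 2 = log (max (1 / δ) (1 / ε)) := by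
  rw [Mshift]
  field_simp
  ring

lemma relProb_eq_sigmoid {ε : ℝ} (hε : ε ≠ 0) (δ g : ℝ) :
    relProb ε δ g = sigmoid (ε * (g - 1) / 2 - log (max (1 / δ) (1 / ε))) := by
  rw [relProb, exp_div_exp_add_one, ← Mshift_sub_one_mul hε]
  ring_nf

end EPTR

/-- The four scalar facts about the ePTR release probability `q(t) = relProb ε δ t` with
threshold shift `M = Mshift ε δ`: (i) `q(0) ≤ δ e^{-ε/2}`; (ii) `q(1) ≤ δ`;
(iii) `1 - q(g) ≤ δ` whenever `g ≥ 2M`; (iv) `e^ε (1 - q(1))` equals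
`e^ε exp(ε(M-1)/2)/(exp(ε(M-1)/2)+1)` and is at least `1`. -/
theorem relProb_facts {ε δ : ℝ} (hε : ε ∈ Set.Ioo (0 : ℝ) 1) (hδ : δ ∈ Set.Ioo (0 : ℝ) 1) :
    EPTR.relProb ε δ 0 ≤ δ * Real.exp (-(ε / 2)) ∧
      EPTR.relProb ε δ 1 ≤ δ ∧
      (∀ g : ℝ, 2 * EPTR.Mshift ε δ ≤ g → 1 - EPTR.relProb ε δ g ≤ δ) ∧
      Real.exp ε * (1 - EPTR.relProb ε δ 1)
          = Real.exp ε * (Real.exp (ε * (EPTR.Mshift ε δ - 1) / 2)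
              / (Real.exp (ε * (EPTR.Mshift ε δ - 1) / 2) + 1)) ∧
      1 ≤ Real.exp ε * (1 - EPTR.relProb ε δ 1) := by
  open Real EPTR in
  have hq := relProb_eq_sigmoid hε.1.ne' δ
  set L := log (max (1 / δ) (1 / ε))
  have hML : ε * (Mshift ε δ - 1) / 2 = L := Mshift_sub_one_mul hε.1.ne' δ
  have hmin : exp (-L) ≤ min δ ε := exp_neg_log_max_one_div_le hδ.1 hε.1
  have hLδ : exp (-L) ≤ δ := hmin.trans (min_le_left _ _)
  have hq1 : 1 - relProb ε δ 1 = sigmoid L := by simp [hq, ← sigmoid_neg]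
  refine ⟨?_, ?_, fun g hg => ?_, ?_, ?_⟩
  · calc relProb ε δ 0 ≤ exp (-(ε / 2) + -L) := by
          rw [hq]; convert sigmoid_le_exp _ using 2; ring
      _ ≤ δ * exp (-(ε / 2)) := by rw [exp_add, mul_comm]; gcongr
  · simpa [hq] using (sigmoid_le_exp _).trans hLδ
  · have hgL : L ≤ ε * (g - 1) / 2 - L := by
      linarith [mul_le_mul_of_nonneg_left hg hε.1.le, hε.1]
    calc 1 - relProb ε δ g ≤ exp (-(ε * (g - 1) / 2 - L)) := hq g ▸ one_sub_sigmoid_le_exp_neg _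
      _ ≤ δ := (exp_le_exp.2 (neg_le_neg hgL)).trans hLδ
  · rw [hq1, hML, exp_div_exp_add_one]
  · rw [hq1]
    exact one_le_exp_mul_sigmoid (hmin.trans (min_le_right _ _))
end
end
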